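/- For any n×p matrix Φ and positive integers k, k' with k + k' ≤ p, δ_{k+k'}(Φ) ≤ (2√(kk')/(k+k'))·θ_{k,k'}(Φ) + max(δ_k(Φ), δ_{k'}(Φ)). -/

import Mathlib

/-!
Both infima are attained, since the admissible sets of constants are closed, nonempty and
bounded below. Given a `(k + k')`-sparse `c`, say with `k ≤ k'`, put its `k'` largest entries into
`c₂` and the rest into `c₁`. Then `‖Φc‖² = ‖Φc₁‖² + ‖Φc₂‖² + 2⟪Φc₁, Φc₂⟫`: the first two terms are
controlled by `δ_k` and `δ_{k'}`, the cross term by `θ_{k,k'} ‖c₁‖ ‖c₂‖`. Since every entry of `c₁`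
is dominated by every entry of `c₂`, averaging gives `k' ‖c₁‖² ≤ k ‖c₂‖²`, which is exactly what
makes `2 ‖c₁‖ ‖c₂‖ ≤ 2√(kk')/(k+k') · (‖c₁‖² + ‖c₂‖²)`.
-/

noncomputable def l2norm {p : ℕ} (c : Fin p → ℝ) : ℝ := Real.sqrt (∑ i, (c i)^2)

def IsSparse {p : ℕ} (k : ℕ) (c : Fin p → ℝ) : Prop :=
  (Finset.univ.filter (fun i => c i ≠ 0)).card ≤ k

/-- The restricted isometry constant `δ_k(Φ)`. -/
noncomputable def ripConst {n p : ℕ} (Φ : Matrix (Fin n) (Fin p) ℝ) (k : ℕ) : ℝ :=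
  sInf {δ : ℝ | 0 ≤ δ ∧ ∀ c : Fin p → ℝ, IsSparse k c →
    (1 - δ) * ∑ i, (c i)^2 ≤ (∑ i, (Φ.mulVec c i)^2) ∧
    (∑ i, (Φ.mulVec c i)^2) ≤ (1 + δ) * ∑ i, (c i)^2}

/-- The restricted orthogonality constant `θ_{k,k'}(Φ)`. -/
noncomputable def roConst {n p : ℕ} (Φ : Matrix (Fin n) (Fin p) ℝ) (k k' : ℕ) : ℝ :=
  sInf {θ : ℝ | 0 ≤ θ ∧ ∀ c c' : Fin p → ℝ, IsSparse k c → IsSparse k' c' →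
    (∀ i, c i = 0 ∨ c' i = 0) →
    |∑ i, (Φ.mulVec c i) * (Φ.mulVec c' i)| ≤ θ * l2norm c * l2norm c'}

open Finset Matrix

section Norms

variable {ι : Type*} [Fintype ι] {m n p : ℕ}

lemma sum_sq_add (x y : ι → ℝ) :
    ∑ i, (x + y) i ^ 2 = ∑ i, x i ^ 2 + ∑ i, y i ^ 2 + 2 * ∑ i, x i * y i := by
  simp only [Pi.add_apply, add_sq, sum_add_distrib, mul_sum, mul_assoc]
  ring

lemma sum_sq_add_of_disjoint {x y : ι → ℝ} (h : ∀ i, x i = 0 ∨ y i = 0) :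
    ∑ i, (x + y) i ^ 2 = ∑ i, x i ^ 2 + ∑ i, y i ^ 2 := by
  have hxy : ∑ i, x i * y i = 0 := sum_eq_zero fun i _ => by rcases h i with h | h <;> simp [h]
  rw [sum_sq_add, hxy, mul_zero, add_zero]

lemma abs_sum_mul_le_l2norm_mul_l2norm (x y : Fin m → ℝ) :
    |∑ i, x i * y i| ≤ l2norm x * l2norm y := by
  refine abs_le.2 ⟨?_, Real.sum_mul_le_sqrt_mul_sqrt univ x y⟩
  have h := Real.sum_mul_le_sqrt_mul_sqrt univ (-x) y
  simp only [Pi.neg_apply, neg_mul, sum_neg_distrib, neg_sq] at h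
  rw [l2norm, l2norm]
  linarith

lemma sum_sq_mulVec_le (Φ : Matrix (Fin n) (Fin p) ℝ) (c : Fin p → ℝ) :
    ∑ i, (Φ *ᵥ c) i ^ 2 ≤ (∑ i, ∑ j, Φ i j ^ 2) * ∑ j, c j ^ 2 := by
  rw [sum_mul]
  exact sum_le_sum fun i _ => by
    simpa [mulVec, dotProduct] using sum_mul_sq_le_sq_mul_sq univ (Φ i) c

lemma l2norm_mulVec_le (Φ : Matrix (Fin n) (Fin p) ℝ) (c : Fin p → ℝ) :
    l2norm (Φ *ᵥ c) ≤ √(∑ i, ∑ j, Φ i j ^ 2) * l2norm c := by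
  rw [l2norm, l2norm, ← Real.sqrt_mul (by positivity)]
  exact Real.sqrt_le_sqrt (sum_sq_mulVec_le Φ c)

end Norms

section Attainment

variable {n p : ℕ}

def ripBounds (Φ : Matrix (Fin n) (Fin p) ℝ) (k : ℕ) : Set ℝ :=
  {δ : ℝ | 0 ≤ δ ∧ ∀ c : Fin p → ℝ, IsSparse k c →
    (1 - δ) * ∑ i, (c i)^2 ≤ (∑ i, (Φ.mulVec c i)^2) ∧
    (∑ i, (Φ.mulVec c i)^2) ≤ (1 + δ) * ∑ i, (c i)^2}

def roBounds (Φ : Matrix (Fin n) (Fin p) ℝ) (k k' : ℕ) : Set ℝ :=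
  {θ : ℝ | 0 ≤ θ ∧ ∀ c c' : Fin p → ℝ, IsSparse k c → IsSparse k' c' →
    (∀ i, c i = 0 ∨ c' i = 0) →
    |∑ i, (Φ.mulVec c i) * (Φ.mulVec c' i)| ≤ θ * l2norm c * l2norm c'}

lemma ripBounds_nonempty (Φ : Matrix (Fin n) (Fin p) ℝ) (k : ℕ) : (ripBounds Φ k).Nonempty := by
  refine ⟨1 + ∑ i, ∑ j, Φ i j ^ 2, by positivity, fun c _ => ?_⟩
  have hΦc := sum_sq_mulVec_le Φ c
  have hc : 0 ≤ ∑ j, c j ^ 2 := by positivity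
  have hM : 0 ≤ ∑ i, ∑ j, Φ i j ^ 2 := by positivity
  constructor <;> nlinarith [sum_nonneg fun i (_ : i ∈ univ) => sq_nonneg ((Φ *ᵥ c) i)]

lemma roBounds_nonempty (Φ : Matrix (Fin n) (Fin p) ℝ) (k k' : ℕ) :
    (roBounds Φ k k').Nonempty := by
  refine ⟨∑ i, ∑ j, Φ i j ^ 2, by positivity, fun c c' _ _ _ => ?_⟩
  have hM : √(∑ i, ∑ j, Φ i j ^ 2) * √(∑ i, ∑ j, Φ i j ^ 2) = ∑ i, ∑ j, Φ i j ^ 2 :=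
    Real.mul_self_sqrt (by positivity)
  calc |∑ i, (Φ *ᵥ c) i * (Φ *ᵥ c') i| ≤ l2norm (Φ *ᵥ c) * l2norm (Φ *ᵥ c') :=
        abs_sum_mul_le_l2norm_mul_l2norm _ _
    _ ≤ (√(∑ i, ∑ j, Φ i j ^ 2) * l2norm c) * (√(∑ i, ∑ j, Φ i j ^ 2) * l2norm c') :=
        mul_le_mul (l2norm_mulVec_le Φ c) (l2norm_mulVec_le Φ c') (Real.sqrt_nonneg _)
          (mul_nonneg (Real.sqrt_nonneg _) (Real.sqrt_nonneg _))
    _ = (∑ i, ∑ j, Φ i j ^ 2) * l2norm c * l2norm c' := by rw [mul_mul_mul_comm, hM, mul_assoc]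

lemma isClosed_ripBounds (Φ : Matrix (Fin n) (Fin p) ℝ) (k : ℕ) : IsClosed (ripBounds Φ k) := by
  simp only [ripBounds, Set.ofPred_and, Set.ofPred_forall]
  exact isClosed_Ici.inter <| isClosed_iInter fun c => isClosed_iInter fun _ =>
    (isClosed_le (by fun_prop) continuous_const).inter (isClosed_le continuous_const (by fun_prop))

lemma isClosed_roBounds (Φ : Matrix (Fin n) (Fin p) ℝ) (k k' : ℕ) :
    IsClosed (roBounds Φ k k') := by
  simp only [roBounds, Set.ofPred_and, Set.ofPred_forall]
  exact isClosed_Ici.inter <| isClosed_iInter fun c => isClosed_iInter fun c' =>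
    isClosed_iInter fun _ => isClosed_iInter fun _ => isClosed_iInter fun _ =>
      isClosed_le continuous_const (by fun_prop)

lemma ripConst_mem_ripBounds (Φ : Matrix (Fin n) (Fin p) ℝ) (k : ℕ) :
    ripConst Φ k ∈ ripBounds Φ k :=
  (isClosed_ripBounds Φ k).csInf_mem (ripBounds_nonempty Φ k) ⟨0, fun _ h => h.1⟩

lemma roConst_mem_roBounds (Φ : Matrix (Fin n) (Fin p) ℝ) (k k' : ℕ) :
    roConst Φ k k' ∈ roBounds Φ k k' :=
  (isClosed_roBounds Φ k k').csInf_mem (roBounds_nonempty Φ k k') ⟨0, fun _ h => h.1⟩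

end Attainment

namespace Finset

variable {ι β : Type*}

theorem exists_subset_card_eq_forall_le [DecidableEq ι] [AddCommMonoid β] [LinearOrder β]
    [IsOrderedCancelAddMonoid β] (w : ι → β) {s : Finset ι} {r : ℕ} (hr : r ≤ #s) :
    ∃ t ⊆ s, #t = r ∧ ∀ i ∈ s \ t, ∀ j ∈ t, w i ≤ w j := by
  obtain ⟨t, hts, hmax⟩ := (s.powersetCard r).exists_max_image (fun t => ∑ j ∈ t, w j)
    (powersetCard_nonempty.2 hr)
  obtain ⟨hts, htr⟩ := mem_powersetCard.1 hts
  refine ⟨t, hts, htr, fun i hi j hj => le_of_not_gt fun hji => ?_⟩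
  obtain ⟨his, hit⟩ := mem_sdiff.1 hi
  have hit' : i ∉ t.erase j := fun h => hit (mem_of_mem_erase h)
  -- exchanging `j` for `i` would increase the sum over `t`
  have hswap : insert i (t.erase j) ∈ s.powersetCard r := by
    refine mem_powersetCard.2 ⟨insert_subset his ((erase_subset j t).trans hts), ?_⟩
    rw [card_insert_of_notMem hit', card_erase_of_mem hj, htr]
    have := card_pos.2 ⟨j, hj⟩
    omega
  have := hmax _ hswap
  rw [sum_insert hit', ← add_sum_erase t w hj] at this
  exact (add_lt_add_left hji _).not_ge this

theorem card_nsmul_sum_le_card_nsmul_sum [AddCommMonoid β] [PartialOrder β]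
    [IsOrderedAddMonoid β] {s t : Finset ι} {w : ι → β} (h : ∀ i ∈ s, ∀ j ∈ t, w i ≤ w j) :
    #t • ∑ i ∈ s, w i ≤ #s • ∑ j ∈ t, w j :=
  calc #t • ∑ i ∈ s, w i = ∑ i ∈ s, ∑ _j ∈ t, w i := by simp only [sum_const, smul_sum]
    _ ≤ ∑ i ∈ s, ∑ j ∈ t, w j := sum_le_sum fun i hi => sum_le_sum fun j hj => h i hi j hj
    _ = #s • ∑ j ∈ t, w j := sum_const _

end Finset

section SparseSplit

variable {p : ℕ}

lemma IsSparse.mono {k l : ℕ} {c : Fin p → ℝ} (hc : IsSparse k c) (hkl : k ≤ l) :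
    IsSparse l c :=
  hc.trans hkl

lemma isSparse_card_ite_mem (S : Finset (Fin p)) (c : Fin p → ℝ) :
    IsSparse #S (fun i => if i ∈ S then c i else 0) :=
  card_le_card fun i hi => by
    by_contra h
    simp [h] at hi

lemma sum_sq_ite_mem (S : Finset (Fin p)) (c : Fin p → ℝ) :
    ∑ i, (if i ∈ S then c i else 0) ^ 2 = ∑ i ∈ S, c i ^ 2 := by
  simp [apply_ite (· ^ 2), sum_ite_mem]

lemma exists_sparse_split {k k' : ℕ} {c : Fin p → ℝ} (hc : IsSparse (k + k') c) :
    ∃ c₁ c₂ : Fin p → ℝ, c = c₁ + c₂ ∧ IsSparse k c₁ ∧ IsSparse k' c₂ ∧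
      (∀ i, c₁ i = 0 ∨ c₂ i = 0) ∧ (k' : ℝ) * ∑ i, c₁ i ^ 2 ≤ k * ∑ i, c₂ i ^ 2 := by
  set T := univ.filter fun i => c i ≠ 0
  have hT : #T ≤ k + k' := hc
  -- `c₂` keeps the `min #T k'` largest entries of `c`, `c₁` the rest
  obtain ⟨T₂, hT₂, hT₂card, hdom⟩ :=
    exists_subset_card_eq_forall_le (fun i => c i ^ 2) (min_le_left #T k')
  have hT₁card : #(T \ T₂) = #T - min #T k' := by rw [card_sdiff_of_subset hT₂, hT₂card]
  refine ⟨fun i => if i ∈ T \ T₂ then c i else 0, fun i => if i ∈ T₂ then c i else 0,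
    ?_, (isSparse_card_ite_mem _ c).mono ?_, (isSparse_card_ite_mem _ c).mono ?_,
    fun i => ?_, ?_⟩
  · ext i
    by_cases h₂ : i ∈ T₂
    · simp [h₂]
    · by_cases hi : c i = 0 <;> simp [h₂, hi, T]
  · omega
  · omega
  · by_cases h₂ : i ∈ T₂ <;> simp [h₂]
  rw [sum_sq_ite_mem, sum_sq_ite_mem]
  obtain hk' | hk' := le_total k' #T
  · have hbal := card_nsmul_sum_le_card_nsmul_sum hdom
    rw [hT₂card, min_eq_right hk', nsmul_eq_mul, nsmul_eq_mul] at hbal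
    have hT₁k : (#(T \ T₂) : ℝ) ≤ k := by exact_mod_cast (by omega : #(T \ T₂) ≤ k)
    nlinarith [sum_nonneg fun i (_ : i ∈ T₂) => sq_nonneg (c i)]
  · have : T \ T₂ = ∅ := by
      rw [← card_eq_zero, hT₁card]
      omega
    rw [this, sum_empty, mul_zero]
    positivity

end SparseSplit

lemma sq_add_mul_mul_le_of_le {a a' s b : ℝ} (hs : 0 ≤ s) (hb : 0 ≤ b) (ha : a ≤ a')
    (h : a' * s ≤ a * b) : (a + a') ^ 2 * (s * b) ≤ a * a' * (s + b) ^ 2 := by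
  have h' : a * s ≤ a' * b := by nlinarith
  -- the difference of the two sides is `(a * s - a' * b) * (a' * s - a * b)`
  nlinarith [mul_nonneg (sub_nonneg.2 h) (sub_nonneg.2 h')]

lemma two_mul_sqrt_mul_sqrt_le {a a' s b : ℝ} (ha : 0 < a + a') (hs : 0 ≤ s) (hb : 0 ≤ b)
    (h : (a + a') ^ 2 * (s * b) ≤ a * a' * (s + b) ^ 2) :
    2 * (√s * √b) ≤ 2 * √(a * a') / (a + a') * (s + b) := by
  have hsqrt : (a + a') * (√s * √b) ≤ √(a * a') * (s + b) := by
    have := Real.sqrt_le_sqrt h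
    rwa [Real.sqrt_mul' _ (mul_nonneg hs hb), Real.sqrt_mul' _ (sq_nonneg (s + b)),
      Real.sqrt_sq ha.le, Real.sqrt_sq (add_nonneg hs hb), Real.sqrt_mul hs] at this
  rw [div_mul_eq_mul_div, le_div_iff₀ ha]
  linarith

lemma exists_balanced_sparse_split {p k k' : ℕ} {c : Fin p → ℝ} (hc : IsSparse (k + k') c) :
    ∃ c₁ c₂ : Fin p → ℝ, c = c₁ + c₂ ∧ IsSparse k c₁ ∧ IsSparse k' c₂ ∧
      (∀ i, c₁ i = 0 ∨ c₂ i = 0) ∧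
      ((k : ℝ) + k') ^ 2 * ((∑ i, c₁ i ^ 2) * ∑ i, c₂ i ^ 2) ≤
        k * k' * (∑ i, c₁ i ^ 2 + ∑ i, c₂ i ^ 2) ^ 2 := by
  obtain hkk | hkk := le_total k k'
  · obtain ⟨c₁, c₂, hc, h₁, h₂, hdisj, h⟩ := exists_sparse_split hc
    exact ⟨c₁, c₂, hc, h₁, h₂, hdisj,
      sq_add_mul_mul_le_of_le (by positivity) (by positivity) (by exact_mod_cast hkk) h⟩
  · obtain ⟨c₂, c₁, hc, h₂, h₁, hdisj, h⟩ :=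
      exists_sparse_split (k := k') (k' := k) (by rwa [add_comm])
    refine ⟨c₁, c₂, hc.trans (add_comm _ _), h₁, h₂, fun i => (hdisj i).symm, ?_⟩
    linear_combination
      sq_add_mul_mul_le_of_le (by positivity) (by positivity) (by exact_mod_cast hkk) h

lemma two_mul_abs_sum_mulVec_mul_le {n p k k' : ℕ} (Φ : Matrix (Fin n) (Fin p) ℝ)
    (hkk : 0 < k + k') {c₁ c₂ : Fin p → ℝ} (hc₁ : IsSparse k c₁) (hc₂ : IsSparse k' c₂)
    (hdisj : ∀ i, c₁ i = 0 ∨ c₂ i = 0)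
    (hbal : ((k : ℝ) + k') ^ 2 * ((∑ i, c₁ i ^ 2) * ∑ i, c₂ i ^ 2) ≤
      k * k' * (∑ i, c₁ i ^ 2 + ∑ i, c₂ i ^ 2) ^ 2) :
    2 * |∑ i, (Φ *ᵥ c₁) i * (Φ *ᵥ c₂) i| ≤
      2 * √((k : ℝ) * k') / (k + k') * roConst Φ k k' * (∑ i, c₁ i ^ 2 + ∑ i, c₂ i ^ 2) := by
  obtain ⟨hθ, hθ_bound⟩ := roConst_mem_roBounds Φ k k'
  have hinner := hθ_bound c₁ c₂ hc₁ hc₂ hdisj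
  rw [l2norm, l2norm, mul_assoc] at hinner
  have hsqrt :=
    two_mul_sqrt_mul_sqrt_le (by exact_mod_cast hkk) (by positivity) (by positivity) hbal
  calc 2 * |∑ i, (Φ *ᵥ c₁) i * (Φ *ᵥ c₂) i|
      ≤ roConst Φ k k' * (2 * (√(∑ i, c₁ i ^ 2) * √(∑ i, c₂ i ^ 2))) := by linarith
    _ ≤ roConst Φ k k' * (2 * √((k : ℝ) * k') / (k + k') * (∑ i, c₁ i ^ 2 + ∑ i, c₂ i ^ 2)) :=
        mul_le_mul_of_nonneg_left hsqrt hθ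
    _ = _ := by ring

theorem ripConst_le_scaled_roConst_add_max_general (n p k k' : ℕ) (Φ : Matrix (Fin n) (Fin p) ℝ) :
    ripConst Φ (k + k') ≤
      (2 * Real.sqrt ((k : ℝ) * (k' : ℝ)) / ((k : ℝ) + (k' : ℝ))) * roConst Φ k k' +
        max (ripConst Φ k) (ripConst Φ k') := by
  obtain hkk | hkk := (k + k').eq_zero_or_pos
  · -- the factor in front of `roConst` is then `0 / 0 = 0`
    obtain ⟨rfl, rfl⟩ := Nat.add_eq_zero_iff.1 hkk
    simp
  have hθ := (roConst_mem_roBounds Φ k k').1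
  obtain ⟨hδ, hδ_bound⟩ := ripConst_mem_ripBounds Φ k
  obtain ⟨-, hδ'_bound⟩ := ripConst_mem_ripBounds Φ k'
  refine csInf_le ⟨0, fun _ h => h.1⟩ ⟨by positivity, fun c hc => ?_⟩
  obtain ⟨c₁, c₂, rfl, hc₁, hc₂, hdisj, hbal⟩ := exists_balanced_sparse_split hc
  have hcross := two_mul_abs_sum_mulVec_mul_le Φ hkk hc₁ hc₂ hdisj hbal
  obtain ⟨hlow₁, hupp₁⟩ := hδ_bound c₁ hc₁
  obtain ⟨hlow₂, hupp₂⟩ := hδ'_bound c₂ hc₂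
  have hmax₁ := mul_le_mul_of_nonneg_right (le_max_left (ripConst Φ k) (ripConst Φ k'))
    (by positivity : 0 ≤ ∑ i, c₁ i ^ 2)
  have hmax₂ := mul_le_mul_of_nonneg_right (le_max_right (ripConst Φ k) (ripConst Φ k'))
    (by positivity : 0 ≤ ∑ i, c₂ i ^ 2)
  rw [sum_sq_add_of_disjoint hdisj, mulVec_add, sum_sq_add]
  constructor
  · linarith [neg_abs_le (∑ i, (Φ *ᵥ c₁) i * (Φ *ᵥ c₂) i)]
  · linarith [le_abs_self (∑ i, (Φ *ᵥ c₁) i * (Φ *ᵥ c₂) i)]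

theorem ripConst_le_scaled_roConst_add_max (n p k k' : ℕ) (Φ : Matrix (Fin n) (Fin p) ℝ)
    (hk : 0 < k) (hk' : 0 < k') (hp : k + k' ≤ p) :
    ripConst Φ (k + k') ≤
      (2 * Real.sqrt ((k : ℝ) * (k' : ℝ)) / ((k : ℝ) + (k' : ℝ))) * roConst Φ k k' +
        max (ripConst Φ k) (ripConst Φ k') :=
  ripConst_le_scaled_roConst_add_max_general n p k k' Φ
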